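/- For every (R, r) ∈ SE(2) and every x₀ ∈ ℝ², one has ‖Ad_{(R,r)⁻¹}(1, Jx₀)‖² = 2 + |x₀ - r|²; in particular, taking x₀ = 0, ‖Ad_{(R,r)⁻¹}(1, 0)‖² = 2 + |r|², so that the distance from the translation part r to the origin equals sqrt(‖Ad_{(R,r)⁻¹}(1, 0)‖² - 2). -/

import Mathlib

/-!
Conjugating `(a, b)` by `(R, r)` gives `(a, Rᵀ (b - a J r))`: the rotation block stays `-aJ`
because `Rᵀ J R = (det R) J` for every `2 × 2` matrix `R`. As `Rᵀ` and `J` are orthogonal,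
`‖Ad_{(R,r)⁻¹}(a, b)‖² = 2a² + |b - aJr|²`, which for `a = 1`, `b = J x₀` is `2 + |x₀ - r|²`.
-/

open Matrix

noncomputable section

/-- The SE(2) matrix `[[R, r],[0, 1]]`. -/
def SE2 (R : Matrix (Fin 2) (Fin 2) ℝ) (r : Fin 2 → ℝ) : Matrix (Fin 3) (Fin 3) ℝ :=
  !![R 0 0, R 0 1, r 0; R 1 0, R 1 1, r 1; 0, 0, 1]

/-- The se(2) matrix `[[-aJ, b],[0, 0]]` with `J = [[0,1],[-1,0]]`, denoted `(a, b)`. -/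
def se2 (a : ℝ) (b : Fin 2 → ℝ) : Matrix (Fin 3) (Fin 3) ℝ :=
  !![0, -a, b 0; a, 0, b 1; 0, 0, 0]

/-- `J = [[0, 1],[-1, 0]]`. -/
def Jmat : Matrix (Fin 2) (Fin 2) ℝ := !![0, 1; -1, 0]

/-- The squared norm `‖ξ‖² = tr(ξᵀξ)` on se(2). -/
def normSq (ξ : Matrix (Fin 3) (Fin 3) ℝ) : ℝ := (ξᵀ * ξ).trace

theorem dotProduct_mulVec_self {n : Type*} [Fintype n] [DecidableEq n] {A : Matrix n n ℝ}
    (hA : Aᵀ * A = 1) (v : n → ℝ) :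
    (A *ᵥ v) ⬝ᵥ (A *ᵥ v) = v ⬝ᵥ v := by
  rw [Matrix.dotProduct_mulVec, Matrix.vecMul_mulVec, hA, Matrix.vecMul_one]

theorem dotProduct_self_fin_two (v : Fin 2 → ℝ) : v ⬝ᵥ v = v 0 ^ 2 + v 1 ^ 2 := by
  simp [dotProduct, Fin.sum_univ_two, sq]

theorem transpose_mul_Jmat_mul (R : Matrix (Fin 2) (Fin 2) ℝ) : Rᵀ * Jmat * R = R.det • Jmat := by
  ext i j
  fin_cases i <;> fin_cases j <;>
    simp [Jmat, Matrix.mul_apply, Fin.sum_univ_two, Matrix.det_fin_two] <;> ring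

theorem Jmat_transpose_mul_self : Jmatᵀ * Jmat = 1 := by
  ext i j
  fin_cases i <;> fin_cases j <;> simp [Jmat, Matrix.mul_apply, Fin.sum_univ_two]

theorem SE2_mul_SE2 (R S : Matrix (Fin 2) (Fin 2) ℝ) (r s : Fin 2 → ℝ) :
    SE2 R r * SE2 S s = SE2 (R * S) (R *ᵥ s + r) := by
  ext i j
  fin_cases i <;> fin_cases j <;>
    simp [SE2, Matrix.mul_apply, Fin.sum_univ_three, Fin.sum_univ_two]

theorem SE2_one_zero : SE2 1 0 = 1 := by
  ext i j
  fin_cases i <;> fin_cases j <;> simp [SE2]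

theorem SE2_inv {R : Matrix (Fin 2) (Fin 2) ℝ} (hR : Rᵀ * R = 1) (r : Fin 2 → ℝ) :
    (SE2 R r)⁻¹ = SE2 Rᵀ (-(Rᵀ *ᵥ r)) := by
  refine Matrix.inv_eq_left_inv ?_
  rw [SE2_mul_SE2, hR, add_neg_cancel, SE2_one_zero]

theorem SE2_mul_se2_mul_SE2 {R S : Matrix (Fin 2) (Fin 2) ℝ} (hSR : S * Jmat * R = Jmat)
    (s r : Fin 2 → ℝ) (a : ℝ) (b : Fin 2 → ℝ) :
    SE2 S s * se2 a b * SE2 R r = se2 a (S *ᵥ (b - a • (Jmat *ᵥ r))) := by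
  rw [← Matrix.ext_iff] at hSR
  simp only [Jmat, Matrix.mul_apply, of_apply, cons_val', cons_val_fin_one, Fin.sum_univ_two,
    Fin.isValue, cons_val_zero, cons_val_one, mul_zero, mul_neg, mul_one, zero_add, neg_mul,
    add_zero, Fin.forall_fin_two] at hSR
  obtain ⟨⟨h00, h01⟩, h10, h11⟩ := hSR
  ext i j
  fin_cases i <;> fin_cases j <;>
    simp [SE2, se2, Jmat, Matrix.mul_apply, Matrix.mulVec, dotProduct, Fin.sum_univ_three,
      Fin.sum_univ_two]
  · linear_combination (-a) * h00
  · linear_combination (-a) * h01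
  · ring
  · linear_combination (-a) * h10
  · linear_combination (-a) * h11
  · ring

theorem normSq_se2 (a : ℝ) (b : Fin 2 → ℝ) : normSq (se2 a b) = 2 * a ^ 2 + b ⬝ᵥ b := by
  simp only [normSq, trace, se2, Fin.isValue, diag_apply, Matrix.mul_apply, transpose_apply,
    of_apply, cons_val', cons_val_fin_one, Fin.sum_univ_three, cons_val_zero, cons_val_one,
    cons_val, mul_zero, zero_add, add_zero, mul_neg, neg_mul, neg_neg, dotProduct, Fin.sum_univ_two]
  ring

theorem normSq_SE2_inv_mul_se2_mul_SE2 {R : Matrix (Fin 2) (Fin 2) ℝ} (hR : Rᵀ * R = 1)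
    (hdet : R.det = 1) (r : Fin 2 → ℝ) (a : ℝ) (b : Fin 2 → ℝ) :
    normSq ((SE2 R r)⁻¹ * se2 a b * SE2 R r) =
      2 * a ^ 2 + (b - a • (Jmat *ᵥ r)) ⬝ᵥ (b - a • (Jmat *ᵥ r)) := by
  have hJ : Rᵀ * Jmat * R = Jmat := by rw [transpose_mul_Jmat_mul, hdet, one_smul]
  have hRt : Rᵀᵀ * Rᵀ = 1 := by rw [transpose_transpose]; exact mul_eq_one_comm.mp hR
  rw [SE2_inv hR, SE2_mul_se2_mul_SE2 hJ, normSq_se2, dotProduct_mulVec_self hRt]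

/-- `‖Ad_{(R,r)⁻¹}(1, Jx₀)‖² = 2 + |x₀ - r|²`; in particular for `x₀ = 0`,
`‖Ad_{(R,r)⁻¹}(1, 0)‖² = 2 + |r|²`, so the distance from `r` to the origin is
`sqrt(‖Ad_{(R,r)⁻¹}(1, 0)‖² - 2)`. -/
theorem distance_to_point_via_adjoint (R : Matrix (Fin 2) (Fin 2) ℝ) (r : Fin 2 → ℝ)
    (hR : Rᵀ * R = 1) (hdet : R.det = 1) (x₀ : Fin 2 → ℝ) :
    normSq ((SE2 R r)⁻¹ * se2 1 (Jmat *ᵥ x₀) * SE2 R r) =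
      2 + ((x₀ 0 - r 0) ^ 2 + (x₀ 1 - r 1) ^ 2) ∧
    normSq ((SE2 R r)⁻¹ * se2 1 0 * SE2 R r) = 2 + (r 0 ^ 2 + r 1 ^ 2) ∧
    Real.sqrt (r 0 ^ 2 + r 1 ^ 2) =
      Real.sqrt (normSq ((SE2 R r)⁻¹ * se2 1 0 * SE2 R r) - 2) := by
  have hAd (x : Fin 2 → ℝ) : normSq ((SE2 R r)⁻¹ * se2 1 (Jmat *ᵥ x) * SE2 R r) =
      2 + ((x 0 - r 0) ^ 2 + (x 1 - r 1) ^ 2) := by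
    rw [normSq_SE2_inv_mul_se2_mul_SE2 hR hdet, one_smul, ← mulVec_sub,
      dotProduct_mulVec_self Jmat_transpose_mul_self, dotProduct_self_fin_two]
    simp
  have h₀ : normSq ((SE2 R r)⁻¹ * se2 1 0 * SE2 R r) = 2 + (r 0 ^ 2 + r 1 ^ 2) := by
    simpa using hAd 0
  exact ⟨hAd x₀, h₀, by rw [h₀, add_sub_cancel_left]⟩
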